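/- arXiv:1105.0841 — 2 statements merged into one kernel-verified Lean document; each statement's English description precedes it below -/
import Mathlib

section
/- Let n ≥ 2 and s ≥ 1 be integers and let a = (a_1,…,a_n) be a vector of positive integers with gcd(a_1,…,a_n) = 1. Then the s-Frobenius number satisfies the upper bound F_s(a) ≤ F_1(a) + (s−1)^{1/(n-1)} · ((n-1)! · a_1·a_2·…·a_n)^{1/(n-1)}, where F_1(a) is the classical Frobenius number of a. -/
/-!
Let `b = F₁ + d + 1`. A lattice point `y ∈ ℕ^(n-1)` with `∑ a_j y_j ≤ d` extends to a
representation of `b`: write `d - ∑ a_j y_j = a_n k + r` with `0 ≤ r < a_n` and add to `(y, k)` a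
fixed representation of `F₁ + r + 1`, which exists by maximality of `F₁`. The pair
(representation, `r`) determines `y`, so `b` has at least `#{y} / a_n` representations, while
`#{y} ≥ (d + 1)^(n-1) / ((n-1)! a_1 ⋯ a_(n-1))` as for the volume of the simplex. Hence if `b` has
fewer than `s` representations, then `(d + 1)^(n-1) ≤ (s - 1) (n-1)! a_1 ⋯ a_n`.
-/

open Finset

theorem Nat.pow_succ_le_pow_succ_add {a b : ℕ} (m : ℕ) (hba : b ≤ a) :
    a ^ (m + 1) ≤ b ^ (m + 1) + (m + 1) * (a - b) * a ^ m := by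
  have hba' : (b : ℤ) ≤ a := by exact_mod_cast hba
  have h := abs_pow_sub_pow_le (a : ℤ) b (m + 1)
  rw [abs_of_nonneg (sub_nonneg.2 (pow_le_pow_left₀ (by positivity) hba' _)),
    abs_of_nonneg (sub_nonneg.2 hba'), abs_of_nonneg (by positivity),
    abs_of_nonneg (by positivity), max_eq_left hba', Nat.add_sub_cancel] at h
  zify [hba]
  push_cast at h
  linarith

theorem Nat.pow_succ_le_mul_sum_pow_of_step_le (N c K : ℕ) (x : ℕ → ℕ)
    (hmono : ∀ k, x (k + 1) ≤ x k) (hstep : ∀ k, x k ≤ x (k + 1) + c) (hK : x K = 0) :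
    x 0 ^ (N + 1) ≤ (N + 1) * c * ∑ k ∈ range K, x k ^ N := by
  induction K generalizing x with
  | zero => simp [hK]
  | succ K ih =>
    have htail := ih (fun k => x (k + 1)) (fun k => hmono _) (fun k => hstep _) hK
    have hdrop : (N + 1) * (x 0 - x 1) * x 0 ^ N ≤ (N + 1) * c * x 0 ^ N := by
      gcongr
      have := hstep 0
      simp only [zero_add] at this
      omega
    rw [sum_range_succ', mul_add]
    linarith [Nat.pow_succ_le_pow_succ_add N (hmono 0)]

/-- The lattice points `y ∈ ℕ^N` with `∑ j, c j * y j ≤ t`, built slice by slice along the last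
coordinate. -/
def latticeSimplex : (N : ℕ) → (Fin N → ℕ) → ℕ → Finset (Fin N → ℕ)
  | 0, _, _ => {![]}
  | N + 1, c, t =>
    (range (t / c (Fin.last N) + 1)).biUnion fun k =>
      (latticeSimplex N (fun j => c j.castSucc) (t - c (Fin.last N) * k)).image (Fin.snoc · k)

theorem sum_mul_le_of_mem_latticeSimplex :
    ∀ {N : ℕ} {c : Fin N → ℕ} {t : ℕ} {y : Fin N → ℕ},
      y ∈ latticeSimplex N c t → ∑ j, c j * y j ≤ t
  | 0, _, _, _, _ => by simp
  | N + 1, c, t, y, hy => by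
    simp only [latticeSimplex, mem_biUnion, mem_range, mem_image] at hy
    obtain ⟨k, hk, y', hy', rfl⟩ := hy
    have hsum := sum_mul_le_of_mem_latticeSimplex hy'
    have hkt : c (Fin.last N) * k ≤ t :=
      (Nat.mul_le_mul_left _ (Nat.le_of_lt_succ hk)).trans (Nat.mul_div_le t _)
    rw [Fin.sum_univ_castSucc]
    simp only [Fin.snoc_castSucc, Fin.snoc_last]
    omega

theorem card_latticeSimplex_succ (N : ℕ) (c : Fin (N + 1) → ℕ) (t : ℕ) :
    #(latticeSimplex (N + 1) c t) = ∑ k ∈ range (t / c (Fin.last N) + 1),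
      #(latticeSimplex N (fun j => c j.castSucc) (t - c (Fin.last N) * k)) := by
  rw [latticeSimplex, card_biUnion]
  · exact sum_congr rfl fun k _ =>
      card_image_of_injective _ (Fin.snoc_left_injective (α := fun _ => ℕ) k)
  · intro k₁ _ k₂ _ hk
    simp only [Function.onFun, disjoint_left, mem_image]
    rintro _ ⟨y₁, _, rfl⟩ ⟨y₂, _, h⟩
    exact hk (Fin.snoc_injective2 h).2.symm

theorem pow_le_mul_card_latticeSimplex :
    ∀ {N : ℕ} {c : Fin N → ℕ}, (∀ j, 0 < c j) → ∀ t : ℕ,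
      (t + 1) ^ N ≤ N.factorial * (∏ j, c j) * #(latticeSimplex N c t)
  | 0, _, _, _ => by simp [latticeSimplex]
  | N + 1, c, hc, t => by
    set cL := c (Fin.last N)
    have hcL : 0 < cL := hc _
    -- telescope `(t + 1) ^ (N + 1)` along `t + 1 - cL * k`, which drops by `cL` per slice
    have hslices : (t + 1) ^ (N + 1) ≤
        (N + 1) * cL * ∑ k ∈ range (t / cL + 1), (t - cL * k + 1) ^ N := by
      have h := Nat.pow_succ_le_mul_sum_pow_of_step_le N cL (t / cL + 1)
        (fun k => t + 1 - cL * k)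
        (fun k => by simp only [mul_add]; omega) (fun k => by simp only [mul_add]; omega)
        (by have := Nat.lt_mul_div_succ t hcL; omega)
      simp only [mul_zero, Nat.sub_zero] at h
      refine h.trans_eq (congrArg _ (sum_congr rfl fun k hk => ?_))
      have : cL * k ≤ t :=
        (Nat.mul_le_mul_left _ (Nat.le_of_lt_succ (mem_range.1 hk))).trans (Nat.mul_div_le t _)
      congr 1
      omega
    calc (t + 1) ^ (N + 1)
        ≤ (N + 1) * cL * ∑ k ∈ range (t / cL + 1), (t - cL * k + 1) ^ N := hslices
      _ ≤ (N + 1) * cL * ∑ k ∈ range (t / cL + 1), N.factorial * (∏ j : Fin N, c j.castSucc) *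
            #(latticeSimplex N (fun j => c j.castSucc) (t - cL * k)) := by
          gcongr with k
          exact pow_le_mul_card_latticeSimplex (fun j => hc _) _
      _ = (N + 1).factorial * (∏ j, c j) * #(latticeSimplex (N + 1) c t) := by
          rw [card_latticeSimplex_succ, Fin.prod_univ_castSucc, Nat.factorial_succ, mul_sum,
            mul_sum]
          exact sum_congr rfl fun k _ => by ring

def representations {ι : Type*} [Fintype ι] (a : ι → ℕ) (b : ℤ) : Set (ι → ℕ) :=
  {z | ∑ i, (a i : ℤ) * (z i : ℤ) = b}

section representations

variable {ι : Type*} [Fintype ι] {a : ι → ℕ}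

theorem representations_finite (ha : ∀ i, 0 < a i) (b : ℤ) : (representations a b).Finite := by
  refine (Set.Finite.pi fun _ => Set.finite_Iic b.toNat).subset fun z hz =>
    Set.mem_univ_pi.2 fun i => ?_
  have hterm : (a i : ℤ) * z i ≤ b :=
    hz ▸ single_le_sum (f := fun i => (a i : ℤ) * z i) (fun _ _ => by positivity) (mem_univ i)
  have : (1 : ℤ) ≤ a i := by exact_mod_cast ha i
  have : (z i : ℤ) ≤ b := by nlinarith
  rw [Set.mem_Iic]
  omega

theorem representations_nonempty_of_isGreatest {F x : ℤ}
    (hF : IsGreatest {b | (representations a b).ncard < 1} F) (hx : F < x) :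
    (representations a x).Nonempty := by
  by_contra hempty
  rw [Set.not_nonempty_iff_eq_empty] at hempty
  exact absurd (hF.2 (by simp [hempty] : x ∈ {b | (representations a b).ncard < 1})) hx.not_ge

end representations

theorem card_latticeSimplex_le_ncard_representations_mul {N : ℕ} {a : Fin (N + 1) → ℕ} {F : ℤ}
    (ha : ∀ i, 0 < a i) (hrep : ∀ x, F < x → (representations a x).Nonempty) (d : ℕ) :
    #(latticeSimplex N (fun j => a j.castSucc) d) ≤
      (representations a (F + d + 1)).ncard * a (Fin.last N) := by
  set aL := a (Fin.last N)
  let w : ℕ → Fin (N + 1) → ℕ := fun r => (hrep (F + r + 1) (by omega)).some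
  let φ : (Fin N → ℕ) → ℕ := fun y => ∑ j, a j.castSucc * y j
  let r : (Fin N → ℕ) → ℕ := fun y => (d - φ y) % aL
  let k : (Fin N → ℕ) → ℕ := fun y => (d - φ y) / aL
  let lift : (Fin N → ℕ) → (Fin (N + 1) → ℕ) × ℕ := fun y => (Fin.snoc y (k y) + w (r y), r y)
  have hmaps : ∀ y ∈ (latticeSimplex N (fun j => a j.castSucc) d : Set (Fin N → ℕ)),
      lift y ∈ representations a (F + d + 1) ×ˢ (range aL : Set ℕ) := by
    intro y hy
    have hφ : φ y ≤ d := sum_mul_le_of_mem_latticeSimplex hy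
    have hdiv : r y + aL * k y = d - φ y := Nat.mod_add_div _ _
    have hw : ∑ i, (a i : ℤ) * (w (r y) i : ℤ) = F + r y + 1 := (hrep _ (by omega)).some_mem
    refine ⟨?_, mem_range.2 (Nat.mod_lt _ (ha _))⟩
    show ∑ i, (a i : ℤ) * ((Fin.snoc y (k y) + w (r y) : Fin (N + 1) → ℕ) i : ℤ) = F + d + 1
    simp only [Pi.add_apply, Nat.cast_add, mul_add, sum_add_distrib, hw]
    rw [Fin.sum_univ_castSucc]
    simp only [Fin.snoc_castSucc, Fin.snoc_last]
    have hφ' : (φ y : ℤ) = ∑ j : Fin N, (a j.castSucc : ℤ) * (y j : ℤ) := by push_cast [φ]; rfl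
    zify [hφ] at hdiv
    linarith
  have hinj : Set.InjOn lift (latticeSimplex N (fun j => a j.castSucc) d) := by
    intro y _ y' _ h
    simp only [lift, Prod.mk.injEq] at h
    rw [h.2, add_left_inj] at h
    exact (Fin.snoc_injective2 h.1).1
  calc #(latticeSimplex N (fun j => a j.castSucc) d)
      = (latticeSimplex N (fun j => a j.castSucc) d : Set (Fin N → ℕ)).ncard :=
        (Set.ncard_coe_finset _).symm
    _ ≤ (representations a (F + d + 1) ×ˢ (range aL : Set ℕ)).ncard :=
        Set.ncard_le_ncard_of_injOn lift hmaps hinj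
          ((representations_finite ha _).prod (finite_toSet _))
    _ = (representations a (F + d + 1)).ncard * aL := by
        rw [Set.ncard_prod, Set.ncard_coe_finset, card_range]

theorem pow_le_of_ncard_representations_lt {N s : ℕ} {a : Fin (N + 1) → ℕ} {F : ℤ}
    (ha : ∀ i, 0 < a i) (hrep : ∀ x, F < x → (representations a x).Nonempty) {d : ℕ}
    (hd : (representations a (F + d + 1)).ncard < s) :
    (d + 1) ^ N ≤ (s - 1) * (N.factorial * ∏ i, a i) := by
  calc (d + 1) ^ N
      ≤ N.factorial * (∏ j : Fin N, a j.castSucc) *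
          #(latticeSimplex N (fun j => a j.castSucc) d) :=
        pow_le_mul_card_latticeSimplex (fun j => ha _) d
    _ ≤ N.factorial * (∏ j : Fin N, a j.castSucc) * ((s - 1) * a (Fin.last N)) := by
        gcongr
        exact (card_latticeSimplex_le_ncard_representations_mul ha hrep d).trans
          (Nat.mul_le_mul_right _ (by omega))
    _ = (s - 1) * (N.factorial * ∏ i, a i) := by
        rw [Fin.prod_univ_castSucc]
        ring

theorem sFrobenius_upper_bound_general {n s : ℕ} (hn : 2 ≤ n) (hs : 1 ≤ s)
    (a : Fin n → ℕ) (ha : ∀ i, 0 < a i)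
    (Fs F1 : ℤ)
    (hFs : IsGreatest
      {b : ℤ | {z : Fin n → ℕ | ∑ i, (a i : ℤ) * (z i : ℤ) = b}.ncard < s} Fs)
    (hF1 : IsGreatest
      {b : ℤ | {z : Fin n → ℕ | ∑ i, (a i : ℤ) * (z i : ℤ) = b}.ncard < 1} F1) :
    (Fs : ℝ) ≤ (F1 : ℝ) + ((s : ℝ) - 1) ^ ((1 : ℝ) / ((n : ℝ) - 1)) *
        (((n - 1).factorial : ℝ) * ∏ i, (a i : ℝ)) ^ ((1 : ℝ) / ((n : ℝ) - 1)) := by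
  obtain ⟨N, rfl⟩ : ∃ N, n = N + 1 := ⟨n - 1, by omega⟩
  have hN : (0 : ℝ) < N := Nat.cast_pos.2 (by omega)
  have hs' : (0 : ℝ) ≤ s - 1 := by simpa using (Nat.one_le_cast (α := ℝ)).2 hs
  have hexp : (1 : ℝ) / (((N + 1 : ℕ) : ℝ) - 1) = (N : ℝ)⁻¹ := by push_cast; ring
  rw [hexp, Nat.add_sub_cancel, ← Real.mul_rpow hs' (by positivity)]
  rcases le_or_gt Fs F1 with hle | hlt
  · exact le_add_of_le_of_nonneg (by exact_mod_cast hle) (by positivity)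
  obtain ⟨d, rfl⟩ : ∃ d : ℕ, Fs = F1 + d + 1 := ⟨(Fs - F1 - 1).toNat, by omega⟩
  have hpow := pow_le_of_ncard_representations_lt ha
    (fun x hx => representations_nonempty_of_isGreatest hF1 hx) hFs.1
  have hpowR : ((d : ℝ) + 1) ^ (N : ℝ) ≤ ((s : ℝ) - 1) * (N.factorial * ∏ i, (a i : ℝ)) := by
    rw [Real.rpow_natCast]
    have h := (Nat.cast_le (α := ℝ)).2 hpow
    push_cast [Nat.cast_sub hs] at h
    exact h
  have := (Real.le_rpow_inv_iff_of_pos (by positivity) (by positivity) hN).2 hpowR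
  push_cast
  linarith

/-- **Upper bound for the s-Frobenius number** (Aliev–Fukshansky–Henk, Theorem 1).
For `n ≥ 2`, `s ≥ 1` and a primitive vector `a` of positive integers, the `s`-Frobenius
number `Fs` satisfies `Fs ≤ F1 + (s-1)^(1/(n-1)) * ((n-1)! * a 1 * ... * a n)^(1/(n-1))`,
where `F1` is the classical Frobenius number of `a`. -/
theorem sFrobenius_upper_bound {n s : ℕ} (hn : 2 ≤ n) (hs : 1 ≤ s)
    (a : Fin n → ℕ) (ha : ∀ i, 0 < a i) (hgcd : Finset.univ.gcd a = 1)
    (Fs F1 : ℤ)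
    (hFs : IsGreatest
      {b : ℤ | {z : Fin n → ℕ | ∑ i, (a i : ℤ) * (z i : ℤ) = b}.ncard < s} Fs)
    (hF1 : IsGreatest
      {b : ℤ | {z : Fin n → ℕ | ∑ i, (a i : ℤ) * (z i : ℤ) = b}.ncard < 1} F1) :
    (Fs : ℝ) ≤ (F1 : ℝ) + ((s : ℝ) - 1) ^ ((1 : ℝ) / ((n : ℝ) - 1)) *
        (((n - 1).factorial : ℝ) * ∏ i, (a i : ℝ)) ^ ((1 : ℝ) / ((n : ℝ) - 1)) :=
  sFrobenius_upper_bound_general hn hs a ha Fs F1 hFs hF1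
end

section
/- Let s ≥ 1 be an integer, let K ⊆ ℝ^n be a convex body (a compact convex set with non-empty interior) and let Λ ⊆ ℝ^n be a full-rank lattice. Then the s-covering radius satisfies the upper bound μ_s(K, Λ) ≤ μ_1(K, Λ) + (s−1)^{1/n} · (det Λ / vol K)^{1/n}, where μ_1(K, Λ) is the classical covering radius, vol K is the n-dimensional Lebesgue measure of K and det Λ is the covolume of Λ. -/
/-!
If `c ^ n * vol K > (s - 1) * det Λ`, then for every `t` the body `t - c • K` contains `s` points
`x + l₁, …, x + lₛ` of one coset of `Λ` (the multi-point Blichfeldt theorem of van der Corput).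
Covering `x` by a translate `b + μ₁ • K` and using `μ₁ • K + c • K = (μ₁ + c) • K` for convex `K`,
the `s` distinct lattice translates `b + lᵢ + (μ₁ + c) • K` all contain `t`.
-/

open MeasureTheory Set Function Submodule Module
open scoped Pointwise ENNReal

theorem Set.exists_injective_forall_mem_of_lt_encard {α : Type*} {A : Set α} {k : ℕ}
    (h : k < A.encard) : ∃ f : Fin (k + 1) → α, Injective f ∧ ∀ i, f i ∈ A := by
  have : Nonempty α := ⟨(Set.encard_pos.1 (pos_of_gt h)).some⟩
  obtain ⟨f, hfA, hf⟩ := (Set.finite_univ (α := Fin (k + 1))).exists_injOn_of_encard_le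
    (t := A) (by simpa [Set.encard_univ] using Order.add_one_le_of_lt h)
  exact ⟨f, injOn_univ.1 hf, fun i => hfA (mem_univ i)⟩

theorem MeasureTheory.IsAddFundamentalDomain.exists_injective_vadd_mem_of_mul_lt_measure
    {G α : Type*} [AddGroup G] [Countable G] [MeasurableSpace G] [MeasurableSpace α]
    [AddAction G α] [MeasurableVAdd G α] {μ : Measure α} [VAddInvariantMeasure G α μ]
    {F M : Set α} (hF : IsAddFundamentalDomain G F μ) (hM : MeasurableSet M) {k : ℕ}
    (h : k * μ F < μ M) : ∃ x, ∃ g : Fin (k + 1) → G, Injective g ∧ ∀ i, g i +ᵥ x ∈ M := by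
  by_contra! hc
  have hcount (x : α) : ∑' g : G, M.indicator 1 (g +ᵥ x) ≤ (k : ℝ≥0∞) := by
    have hA : {g : G | g +ᵥ x ∈ M}.encard ≤ k := not_lt.1 fun hlt => by
      obtain ⟨g, hg, hgM⟩ := exists_injective_forall_mem_of_lt_encard hlt
      obtain ⟨i, hi⟩ := hc x g hg
      exact hi (hgM i)
    calc ∑' g : G, M.indicator 1 (g +ᵥ x) = ∑' _ : {g : G | g +ᵥ x ∈ M}, (1 : ℝ≥0∞) :=
          (tsum_subtype _ _).symm
      _ = {g : G | g +ᵥ x ∈ M}.encard := ENNReal.tsum_set_one _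
      _ ≤ k := by exact_mod_cast hA
  -- `μ M` is the integral over `F` of the number of `g` with `g +ᵥ x ∈ M`, which is at most `k`.
  refine h.not_ge ?_
  calc μ M = ∫⁻ x, M.indicator 1 x ∂μ := (lintegral_indicator_one hM).symm
    _ = ∑' g : G, ∫⁻ x in F, M.indicator 1 (g +ᵥ x) ∂μ := hF.lintegral_eq_tsum'' _
    _ = ∫⁻ x in F, ∑' g : G, M.indicator 1 (g +ᵥ x) ∂μ :=
      (lintegral_tsum fun g =>
        ((measurable_one.indicator hM).comp (measurable_const_vadd g)).aemeasurable).symm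
    _ ≤ ∫⁻ _ in F, (k : ℝ≥0∞) ∂μ := lintegral_mono hcount
    _ = k * μ F := setLIntegral_const F _

section MultiCovering

variable {E : Type*}

/-- The `s`-covering radius `μ_s(K, Λ)` is the least `r > 0` with `IsMultiCovering Λ K s r`. -/
def IsMultiCovering [AddCommGroup E] [Module ℝ E] (Λ K : Set E) (s : ℕ) (r : ℝ) : Prop :=
  ∀ t : E, ∃ b : Fin s → E, Injective b ∧ ∀ i, b i ∈ Λ ∧ ∃ x ∈ K, t = b i + r • x

theorem IsMultiCovering.le_one_of_subsingleton [AddCommGroup E] [Module ℝ E] [Subsingleton E]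
    {Λ K : Set E} {s : ℕ} {r : ℝ} (h : IsMultiCovering Λ K s r) : s ≤ 1 := by
  obtain ⟨b, hb, -⟩ := h 0
  exact Fin.subsingleton_iff_le_one.1 hb.subsingleton

theorem IsMultiCovering.add [AddCommGroup E] [Module ℝ E] {L : AddSubgroup E} {K : Set E}
    (hK : Convex ℝ K) {a c : ℝ} (ha : 0 ≤ a) (hc : 0 ≤ c) {s : ℕ}
    (h₁ : IsMultiCovering L K 1 a)
    (h : ∀ t : E, ∃ x : E, ∃ l : Fin s → L, Injective l ∧ ∀ i, l i +ᵥ x ∈ t +ᵥ (-c) • K) :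
    IsMultiCovering L K s (a + c) := by
  intro t
  obtain ⟨x, l, hl, hlx⟩ := h t
  obtain ⟨b, -, hb⟩ := h₁ x
  obtain ⟨hbL, v, hv, rfl⟩ := hb 0
  refine ⟨fun i => b 0 + l i, fun i j hij => hl (Subtype.ext (add_left_cancel hij)),
    fun i => ⟨add_mem hbL (l i).2, ?_⟩⟩
  obtain ⟨_, ⟨u, hu, rfl⟩, hlu⟩ := hlx i
  obtain ⟨w, hw, hwvu⟩ : ∃ w ∈ K, (a + c) • w = a • v + c • u := by
    rw [← mem_smul_set, hK.add_smul ha hc]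
    exact add_mem_add (smul_mem_smul_set hv) (smul_mem_smul_set hu)
  refine ⟨w, hw, ?_⟩
  rw [hwvu]
  simp only [vadd_eq_add, AddSubgroup.vadd_def, neg_smul] at hlu
  linear_combination (norm := module) hlu

theorem IsMultiCovering.add_of_mul_measure_lt [NormedAddCommGroup E] [NormedSpace ℝ E]
    [FiniteDimensional ℝ E] [MeasurableSpace E] [BorelSpace E] {μ : Measure E}
    [μ.IsAddHaarMeasure] {L : AddSubgroup E} [Countable L] {F K : Set E}
    (hF : IsAddFundamentalDomain L F μ) (hK : Convex ℝ K) (hKm : MeasurableSet K) {a c : ℝ}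
    (ha : 0 ≤ a) (hc : 0 ≤ c) (h₁ : IsMultiCovering L K 1 a) {k : ℕ}
    (hvol : k * μ F < ENNReal.ofReal (c ^ finrank ℝ E) * μ K) :
    IsMultiCovering L K (k + 1) (a + c) := by
  refine h₁.add hK ha hc fun t => hF.exists_injective_vadd_mem_of_mul_lt_measure
    ((hKm.const_smul₀ _).const_vadd t) ?_
  rwa [measure_vadd, Measure.addHaar_smul, abs_pow, abs_neg, abs_of_nonneg hc]

end MultiCovering

namespace Matrix

variable {ι : Type*} [Fintype ι] [DecidableEq ι] (B : Matrix ι ι ℝ) (hB : IsUnit B.det)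

noncomputable def colBasis : Basis ι ℝ (ι → ℝ) :=
  (Pi.basisFun ℝ ι).map (B.toLinearEquiv' (B.invertibleOfIsUnitDet hB))

theorem colBasis_apply (i : ι) : B.colBasis hB i = B *ᵥ Pi.single i 1 := by
  simp [colBasis, toLinearEquiv']

theorem of_colBasis : Matrix.of (B.colBasis hB) = Bᵀ := by
  ext i j
  simp [colBasis_apply, mulVec_single]

theorem coe_span_colBasis :
    (span ℤ (range (B.colBasis hB)) : Set (ι → ℝ)) =
      {x | ∃ z : ι → ℤ, x = B *ᵥ fun i => (z i : ℝ)} := by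
  have hsum (z : ι → ℤ) : ∑ i, z i • B.colBasis hB i = B *ᵥ fun i => (z i : ℝ) := by
    ext j
    simp [colBasis_apply, mulVec, dotProduct, Finset.sum_apply, mul_comm]
  ext x
  simp only [SetLike.mem_coe, mem_span_range_iff_exists_fun, hsum, mem_ofPred_eq, eq_comm]

end Matrix

theorem Module.Basis.isMultiCovering_span_add_of_mul_lt {ι : Type*} [Fintype ι]
    [DecidableEq ι] (b : Basis ι ℝ (ι → ℝ)) {K : Set (ι → ℝ)} (hK : Convex ℝ K)
    (hKm : MeasurableSet K) (hKfin : volume K ≠ ∞) {a c : ℝ} (ha : 0 ≤ a) (hc : 0 ≤ c)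
    (h₁ : IsMultiCovering (span ℤ (range b)) K 1 a) {k : ℕ}
    (hvol : k * |(Matrix.of b).det| < c ^ Fintype.card ι * (volume K).toReal) :
    IsMultiCovering (span ℤ (range b)) K (k + 1) (a + c) := by
  have : Countable (span ℤ (range b)).toAddSubgroup :=
    inferInstanceAs (Countable (span ℤ (range b)))
  refine IsMultiCovering.add_of_mul_measure_lt (L := (span ℤ (range b)).toAddSubgroup)
    (ZSpan.isAddFundamentalDomain' b volume) hK hKm ha hc h₁ ?_
  rw [ZSpan.volume_fundamentalDomain, ← ENNReal.ofReal_toReal hKfin, finrank_fintype_fun_eq_card,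
    ← ENNReal.ofReal_natCast, ← ENNReal.ofReal_mul (by positivity),
    ← ENNReal.ofReal_mul (by positivity), ENNReal.ofReal_lt_ofReal_iff_of_nonneg (by positivity)]
  exact hvol

theorem Real.mul_lt_pow_of_rpow_mul_rpow_lt {a b c : ℝ} {n : ℕ} (hn : n ≠ 0) (ha : 0 ≤ a)
    (hb : 0 ≤ b) (h : a ^ (1 / n : ℝ) * b ^ (1 / n : ℝ) < c) : a * b < c ^ n := by
  have hc : 0 ≤ c := (by positivity : 0 ≤ a ^ (1 / n : ℝ) * b ^ (1 / n : ℝ)).trans h.le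
  rw [← Real.mul_rpow ha hb, one_div, Real.rpow_inv_lt_iff_of_pos (mul_nonneg ha hb) hc
    (by positivity)] at h
  exact_mod_cast h

/-- **Upper bound for the s-covering radius** (Lemma 1 in Aliev–Fukshansky–Henk).
Let `K ⊆ ℝⁿ` be a convex body, `Λ = B·ℤⁿ` a full-rank lattice, `μ₁` the classical
covering radius and `μ` the `s`-covering radius of `K` with respect to `Λ`. Then
`μ ≤ μ₁ + (s-1)^(1/n) * (det Λ / vol K)^(1/n)`. -/
theorem sCoveringRadius_upper_bound {n s : ℕ} (hs : 1 ≤ s)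
    (K : Set (Fin n → ℝ)) (hKcpt : IsCompact K) (hKconv : Convex ℝ K)
    (hKint : (interior K).Nonempty)
    (B : Matrix (Fin n) (Fin n) ℝ) (hB : IsUnit B.det)
    (Λ : Set (Fin n → ℝ))
    (hΛ : Λ = {x | ∃ z : Fin n → ℤ, x = B.mulVec fun i => (z i : ℝ)})
    (μ μ₁ : ℝ)
    (hμ : IsLeast {r : ℝ | 0 < r ∧ ∀ t : Fin n → ℝ,
        ∃ b : Fin s → (Fin n → ℝ), Function.Injective b ∧
          ∀ i, b i ∈ Λ ∧ ∃ x ∈ K, t = b i + r • x} μ)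
    (hμ₁ : IsLeast {r : ℝ | 0 < r ∧ ∀ t : Fin n → ℝ,
        ∃ b : Fin 1 → (Fin n → ℝ), Function.Injective b ∧
          ∀ i, b i ∈ Λ ∧ ∃ x ∈ K, t = b i + r • x} μ₁) :
    μ ≤ μ₁ + ((s : ℝ) - 1) ^ ((1 : ℝ) / (n : ℝ)) *
        (|B.det| / (MeasureTheory.volume K).toReal) ^ ((1 : ℝ) / (n : ℝ)) := by
  obtain ⟨k, rfl⟩ : ∃ k, s = k + 1 := ⟨s - 1, by omega⟩
  rw [Nat.cast_succ, add_sub_cancel_right]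
  rcases k.eq_zero_or_pos with rfl | hk
  · exact (hμ.unique hμ₁).le.trans (le_add_of_nonneg_right (by positivity))
  rcases n.eq_zero_or_pos with rfl | hn
  · exact absurd (IsMultiCovering.le_one_of_subsingleton hμ.1.2) (by omega)
  subst hΛ
  rw [← B.coe_span_colBasis hB] at hμ hμ₁
  have hV : 0 < (volume K).toReal := ENNReal.toReal_pos
    (Measure.measure_pos_of_nonempty_interior volume hKint).ne' hKcpt.measure_lt_top.ne
  refine le_of_forall_gt_imp_ge_of_dense fun r hr => ?_
  have hμ₁r : μ₁ ≤ r := (le_add_of_nonneg_right (by positivity)).trans hr.le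
  have hc : (k : ℝ) * (|B.det| / (volume K).toReal) < (r - μ₁) ^ n :=
    Real.mul_lt_pow_of_rpow_mul_rpow_lt hn.ne' k.cast_nonneg (by positivity) (by linarith)
  have hcover := (B.colBasis hB).isMultiCovering_span_add_of_mul_lt hKconv
    hKcpt.isClosed.measurableSet hKcpt.measure_lt_top.ne hμ₁.1.1.le (sub_nonneg.2 hμ₁r) hμ₁.1.2
    (by rwa [B.of_colBasis, Matrix.det_transpose, Fintype.card_fin, ← div_lt_iff₀ hV,
      mul_div_assoc])
  rw [add_sub_cancel] at hcover
  exact hμ.2 ⟨hμ₁.1.1.trans_le hμ₁r, hcover⟩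
end
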